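/- arXiv:2605.15933 — 2 statements merged into one kernel-verified Lean document; each statement's English description precedes it below -/
import Mathlib

section
/- The sequence of cokernels and kernels is a complex: given cochain complexes (Aⁱ, d) and (Bⁱ, d) of abelian groups with degree-one maps Sⁱ : Aⁱ → Bⁱ⁺¹ satisfying d∘Sⁱ = Sⁱ⁺¹∘d, and an index j such that Sⁱ is injective for i < j, Sʲ is bijective, and Sⁱ is surjective for i > j, define D : coker Sʲ⁻¹ → ker Sʲ⁺¹ by D = d ∘ (Sʲ)⁻¹ ∘ d (on representatives). Then D is well-defined on coker Sʲ⁻¹, takes values in ker Sʲ⁺¹, and satisfies D ∘ d̄ = 0 (where d̄ : coker Sʲ → coker Sʲ⁻¹ is induced by d) and d ∘ D = 0 (composing into ker Sʲ⁺²). -/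
open Function

/-- In the BGG setup (cochain complexes `A`, `B` with differentials `dA`, `dB`,
degree-one maps `S i : A i →ₗ B (i+1)` commuting with the differentials, `S i` injective for
`i < k+1`, `S (k+1)` bijective with inverse `Sinv`, `S i` surjective for `i > k+1`), the
operator `D = d ∘ (S^(k+1))⁻¹ ∘ d : B (k+1) → A (k+2)` is well defined on the cokernel of
`S k` (it kills `range (S k)`, hence descends to `coker S k`), takes values in `ker S (k+2)`,
and satisfies `D ∘ d = 0` (on the previous cokernel) and `d ∘ D = 0` (into `ker S (k+1+1+1)`). -/
theorem stmt0_cokernel_kernel_sequence_is_complex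
    (R : Type) [CommRing R]
    (A B : ℤ → Type)
    [∀ i, AddCommGroup (A i)] [∀ i, Module R (A i)]
    [∀ i, AddCommGroup (B i)] [∀ i, Module R (B i)]
    (dA : ∀ i : ℤ, A i →ₗ[R] A (i + 1))
    (dB : ∀ i : ℤ, B i →ₗ[R] B (i + 1))
    (hddA : ∀ i : ℤ, (dA (i + 1)).comp (dA i) = 0)
    (hddB : ∀ i : ℤ, (dB (i + 1)).comp (dB i) = 0)
    (S : ∀ i : ℤ, A i →ₗ[R] B (i + 1))
    (hcomm : ∀ i : ℤ, (dB (i + 1)).comp (S i) = (S (i + 1)).comp (dA i))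
    (k : ℤ)
    (hinj : ∀ i : ℤ, i < k + 1 → Function.Injective (S i))
    (Sinv : B (k + 1 + 1) →ₗ[R] A (k + 1))
    (hSinv₁ : ∀ b : B (k + 1 + 1), S (k + 1) (Sinv b) = b)
    (hSinv₂ : ∀ a : A (k + 1), Sinv (S (k + 1) a) = a)
    (hsurj : ∀ i : ℤ, k + 1 < i → Function.Surjective (S i))
    -- the operator D = d ∘ (S^{k+1})⁻¹ ∘ d on representatives
    (D : B (k + 1) → A (k + 1 + 1))
    (hD : ∀ v : B (k + 1), D v = dA (k + 1) (Sinv (dB (k + 1) v))) :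
    -- D is well defined on coker (S k): it vanishes on range (S k), hence descends
    (∀ u : A k, D (S k u) = 0) ∧
    (∀ v v' : B (k + 1), (∃ u : A k, v - v' = S k u) → D v = D v') ∧
    -- D takes values in ker S (k+2)
    (∀ v : B (k + 1), S (k + 1 + 1) (D v) = 0) ∧
    -- D ∘ d̄ = 0, where d̄ : coker S (k-1) → coker S k is induced by dB k
    (∀ v : B k, D (dB k v) = 0) ∧
    -- d ∘ D = 0, composing into ker S (k+1+1+1)
    (∀ v : B (k + 1), dA (k + 1 + 1) (D v) = 0) := by
  have hDlin : ∀ v : B (k + 1), S (k + 1 + 1) (D v) = dB (k + 1 + 1) (dB (k + 1) v) := by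
    intro v
    rw [hD]
    have := LinearMap.congr_fun (hcomm (k+1)) (Sinv (dB (k + 1) v))
    simp only [LinearMap.comp_apply] at this
    rw [← this, hSinv₁]
  have h1 : ∀ u : A k, D (S k u) = 0 := by
    intro u
    rw [hD]
    have hc := LinearMap.congr_fun (hcomm k) u
    simp only [LinearMap.comp_apply] at hc
    rw [hc, hSinv₂]
    exact LinearMap.congr_fun (hddA k) u
  refine ⟨h1, ?_, ?_, ?_, ?_⟩
  · intro v v' ⟨u, hu⟩
    have : v = v' + S k u := by rw [← hu]; abel
    rw [this, hD, hD]
    simp only [map_add]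
    have : dA (k + 1) (Sinv (S (k + 1) (dA k u))) = 0 := by
      rw [hSinv₂]; exact LinearMap.congr_fun (hddA k) u
    have hc := LinearMap.congr_fun (hcomm k) u
    simp only [LinearMap.comp_apply] at hc
    rw [hc, this, add_zero]
  · intro v
    rw [hDlin]
    exact LinearMap.congr_fun (hddB (k+1)) v
  · intro v
    rw [hD]
    have : dB (k + 1) (dB k v) = 0 := LinearMap.congr_fun (hddB k) v
    rw [this]
    simp
  · intro v
    rw [hD]
    exact LinearMap.congr_fun (hddA (k+1)) _
end

section
/- Well-definedness of the connecting operator D: under the BGG hypotheses (Sⁱ injective for i < j, Sʲ bijective, Sⁱ surjective for i > j, all Sⁱ commuting with d), if v, v' ∈ Bʲ satisfy v - v' = Sʲ⁻¹(u) for some u ∈ Aʲ⁻¹, then d((Sʲ)⁻¹(d v)) = d((Sʲ)⁻¹(d v')), that is, d((Sʲ)⁻¹(d(Sʲ⁻¹ u))) = 0; moreover, d((Sʲ)⁻¹(d v)) lies in ker Sʲ⁺¹ ⊆ Aʲ⁺¹ for every v ∈ Bʲ. -/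
open Function

/-- Well-definedness of the connecting operator `D = d ∘ (S^{k+1})⁻¹ ∘ d`:
under the BGG hypotheses, (a) if `v, v' ∈ B (k+1)` differ by an element `S k u` of the image
of `S k`, then `D v = D v'`; more precisely (b) `d((S^{k+1})⁻¹(d(S k u))) = 0`; and
(c) `d((S^{k+1})⁻¹(d v))` lies in `ker S (k+2)` for every `v`. -/
theorem stmt1_connecting_operator_well_defined
    (R : Type) [CommRing R]
    (A B : ℤ → Type)
    [∀ i, AddCommGroup (A i)] [∀ i, Module R (A i)]
    [∀ i, AddCommGroup (B i)] [∀ i, Module R (B i)]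
    (dA : ∀ i : ℤ, A i →ₗ[R] A (i + 1))
    (dB : ∀ i : ℤ, B i →ₗ[R] B (i + 1))
    (hddA : ∀ i : ℤ, (dA (i + 1)).comp (dA i) = 0)
    (hddB : ∀ i : ℤ, (dB (i + 1)).comp (dB i) = 0)
    (S : ∀ i : ℤ, A i →ₗ[R] B (i + 1))
    (hcomm : ∀ i : ℤ, (dB (i + 1)).comp (S i) = (S (i + 1)).comp (dA i))
    (k : ℤ)
    (hinj : ∀ i : ℤ, i < k + 1 → Function.Injective (S i))
    (Sinv : B (k + 1 + 1) →ₗ[R] A (k + 1))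
    (hSinv₁ : ∀ b : B (k + 1 + 1), S (k + 1) (Sinv b) = b)
    (hSinv₂ : ∀ a : A (k + 1), Sinv (S (k + 1) a) = a)
    (hsurj : ∀ i : ℤ, k + 1 < i → Function.Surjective (S i)) :
    -- (b) elements of the image of S k are killed
    (∀ u : A k, dA (k + 1) (Sinv (dB (k + 1) (S k u))) = 0) ∧
    -- (a) hence D is well defined on coker S k
    (∀ v v' : B (k + 1), (∃ u : A k, v - v' = S k u) →
      dA (k + 1) (Sinv (dB (k + 1) v)) = dA (k + 1) (Sinv (dB (k + 1) v'))) ∧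
    -- (c) D v lies in ker S (k+2) for every v
    (∀ v : B (k + 1), S (k + 1 + 1) (dA (k + 1) (Sinv (dB (k + 1) v))) = 0) := by
  have hb : ∀ u : A k, dA (k + 1) (Sinv (dB (k + 1) (S k u))) = 0 := by
    intro u
    have h1 : dB (k + 1) (S k u) = S (k + 1) (dA k u) :=
      LinearMap.congr_fun (hcomm k) u
    rw [h1, hSinv₂]
    exact LinearMap.congr_fun (hddA k) u
  refine ⟨hb, ?_, ?_⟩
  · rintro v v' ⟨u, hu⟩
    have : dA (k + 1) (Sinv (dB (k + 1) (v - v'))) = 0 := by rw [hu]; exact hb u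
    simpa [map_sub, sub_eq_zero] using this
  · intro v
    have h2 : S (k + 1 + 1) (dA (k + 1) (Sinv (dB (k + 1) v)))
        = dB (k + 1 + 1) (S (k + 1) (Sinv (dB (k + 1) v))) :=
      (LinearMap.congr_fun (hcomm (k + 1)) (Sinv (dB (k + 1) v))).symm
    rw [h2, hSinv₁]
    exact LinearMap.congr_fun (hddB (k + 1)) v
end
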